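/- The noisy spin observables A_c(x) = (1/2)[I + x(c₁σ₁+c₂σ₂)] and B_c(y) = (1/2)[I + y(c₂σ₁+c₁σ₂)] are the marginals of some bi-observable on {−1,+1}² (i.e., they are compatible via a D₂-covariant joint observable) if and only if |c₁| ≤ 1/√2 and |c₂| ≤ 1/√2. -/

import Mathlib

open scoped BigOperators Classical ComplexOrder

/-- The first Pauli matrix. -/
def pauli1 : Matrix (Fin 2) (Fin 2) ℂ := !![0, 1; 1, 0]
/-- The second Pauli matrix. -/
def pauli2 : Matrix (Fin 2) (Fin 2) ℂ := !![0, -Complex.I; Complex.I, 0]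
/-- The third Pauli matrix. -/
def pauli3 : Matrix (Fin 2) (Fin 2) ℂ := !![1, 0; 0, -1]

/-- The outcomes `+1, −1` encoded by booleans. -/
def sg (b : Bool) : ℝ := if b then 1 else -1

/-- The unitary representing the 180° rotation around `n = (i+j)/√2`. -/
noncomputable def Un : Matrix (Fin 2) (Fin 2) ℂ :=
  -Complex.I • ((Real.sqrt 2)⁻¹ • (pauli1 + pauli2))

/-- The unitary representing the 180° rotation around `m = (j−i)/√2`. -/
noncomputable def Um : Matrix (Fin 2) (Fin 2) ℂ :=
  -Complex.I • ((Real.sqrt 2)⁻¹ • (pauli2 - pauli1))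

/-!
Expand `2 × 2` Hermitian matrices in the Pauli basis as `bloch m₀ m₁ m₂ m₃`; such a matrix is
positive semidefinite iff `0 ≤ m₀` and `m₁² + m₂² + m₃² ≤ m₀²`. Conjugation by `Un` swaps `σ₁` and
`σ₂`, conjugation by `Um` sends `σ₁ ↦ -σ₂`, `σ₂ ↦ -σ₁`, and both negate `σ₃`.

So in a covariant bi-observable `M(+,+) = bloch n₀ n n 0` and `M(+,-) = bloch p₀ p (-p) 0`, and the
first marginal `M(+,+) + M(+,-) = A_c(+)` reads `n₀ + p₀ = 1/2`, `n + p = c₁/2`, `n - p = c₂/2`.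
Positivity gives `√2 (|n| + |p|) ≤ n₀ + p₀ = 1/2`, whence `|c₁|, |c₂| ≤ 1/√2`. Conversely the
family `covariantJoint` has the right covariance and marginals for every `γ`, and is positive once
`√2 |c₁ + c₂| - 1 ≤ γ ≤ 1 - √2 |c₁ - c₂|`; this interval is nonempty because
`|c₁ + c₂| + |c₁ - c₂| = 2 max |cᵢ|`.
-/
open Complex Matrix

noncomputable def bloch (m₀ m₁ m₂ m₃ : ℝ) : Matrix (Fin 2) (Fin 2) ℂ :=
  m₀ • (1 : Matrix (Fin 2) (Fin 2) ℂ) + m₁ • pauli1 + m₂ • pauli2 + m₃ • pauli3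

lemma bloch_eq_fin_two (m₀ m₁ m₂ m₃ : ℝ) :
    bloch m₀ m₁ m₂ m₃ = !![(m₀ + m₃ : ℂ), m₁ - m₂ * I; m₁ + m₂ * I, m₀ - m₃] := by
  ext i j
  fin_cases i <;> fin_cases j <;> simp [bloch, pauli1, pauli2, pauli3, Complex.real_smul] <;> ring

lemma bloch_add (m₀ m₁ m₂ m₃ n₀ n₁ n₂ n₃ : ℝ) :
    bloch m₀ m₁ m₂ m₃ + bloch n₀ n₁ n₂ n₃ = bloch (m₀ + n₀) (m₁ + n₁) (m₂ + n₂) (m₃ + n₃) := by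
  simp only [bloch, add_smul]; abel

lemma bloch_inj {m₀ m₁ m₂ m₃ n₀ n₁ n₂ n₃ : ℝ} :
    bloch m₀ m₁ m₂ m₃ = bloch n₀ n₁ n₂ n₃ ↔ m₀ = n₀ ∧ m₁ = n₁ ∧ m₂ = n₂ ∧ m₃ = n₃ := by
  refine ⟨fun h => ?_, by rintro ⟨rfl, rfl, rfl, rfl⟩; rfl⟩
  simp only [bloch_eq_fin_two] at h
  have h00 := congrFun₂ h 0 0
  have h01 := congrFun₂ h 0 1
  have h11 := congrFun₂ h 1 1
  simp [Complex.ext_iff] at h00 h01 h11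
  exact ⟨by linarith, by linarith, by linarith, by linarith⟩

lemma Matrix.IsHermitian.exists_eq_bloch {A : Matrix (Fin 2) (Fin 2) ℂ} (hA : A.IsHermitian) :
    ∃ m₀ m₁ m₂ m₃ : ℝ, A = bloch m₀ m₁ m₂ m₃ := by
  refine ⟨((A 0 0).re + (A 1 1).re) / 2, (A 0 1).re, -(A 0 1).im, ((A 0 0).re - (A 1 1).re) / 2, ?_⟩
  have h00 : (A 0 0).im = 0 := Complex.conj_eq_iff_im.mp (hA.apply 0 0)
  have h11 : (A 1 1).im = 0 := Complex.conj_eq_iff_im.mp (hA.apply 1 1)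
  have h10 := hA.apply 1 0
  ext i j
  fin_cases i <;> fin_cases j <;> simp [bloch_eq_fin_two, ← h10, Complex.ext_iff, h00, h11] <;> ring

-- The quadratic form `xᴴ (bloch m₀ m₁ m₂ m₃) x` at `x = (a + b i, c + d i)`.
lemma bloch_form_nonneg {m₀ m₁ m₂ m₃ : ℝ} (h₀ : 0 ≤ m₀) (h : m₁ ^ 2 + m₂ ^ 2 + m₃ ^ 2 ≤ m₀ ^ 2)
    (a b c d : ℝ) :
    0 ≤ (m₀ + m₃) * (a ^ 2 + b ^ 2) + (m₀ - m₃) * (c ^ 2 + d ^ 2) +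
      2 * (m₁ * (a * c + b * d) + m₂ * (a * d - b * c)) := by
  obtain ⟨hm₃, hm₃'⟩ := abs_le_of_sq_le_sq' (a := m₃) (by nlinarith [sq_nonneg m₁, sq_nonneg m₂]) h₀
  set X := (m₀ + m₃) * (a ^ 2 + b ^ 2)
  set Y := (m₀ - m₃) * (c ^ 2 + d ^ 2)
  set Z := m₁ * (a * c + b * d) + m₂ * (a * d - b * c)
  have hX : 0 ≤ X := mul_nonneg (by linarith) (by positivity)
  have hY : 0 ≤ Y := mul_nonneg (by linarith) (by positivity)
  have hZ : Z ^ 2 ≤ ((X + Y) / 2) ^ 2 :=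
    calc Z ^ 2 ≤ (m₁ ^ 2 + m₂ ^ 2) * ((a * c + b * d) ^ 2 + (a * d - b * c) ^ 2) := by
          nlinarith [sq_nonneg (m₁ * (a * d - b * c) - m₂ * (a * c + b * d))]
      _ = (m₁ ^ 2 + m₂ ^ 2) * ((a ^ 2 + b ^ 2) * (c ^ 2 + d ^ 2)) := by ring
      _ ≤ (m₀ ^ 2 - m₃ ^ 2) * ((a ^ 2 + b ^ 2) * (c ^ 2 + d ^ 2)) := by gcongr; linarith
      _ = X * Y := by ring
      _ ≤ ((X + Y) / 2) ^ 2 := by nlinarith [sq_nonneg (X - Y)]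
  linarith [(abs_le_of_sq_le_sq' hZ (by positivity)).1]

lemma posSemidef_bloch_iff {m₀ m₁ m₂ m₃ : ℝ} :
    (bloch m₀ m₁ m₂ m₃).PosSemidef ↔ 0 ≤ m₀ ∧ m₁ ^ 2 + m₂ ^ 2 + m₃ ^ 2 ≤ m₀ ^ 2 := by
  constructor
  · intro h
    have h00 : 0 ≤ bloch m₀ m₁ m₂ m₃ 0 0 := h.diag_nonneg
    have h11 : 0 ≤ bloch m₀ m₁ m₂ m₃ 1 1 := h.diag_nonneg
    have hdet := h.det_nonneg
    rw [bloch_eq_fin_two, Matrix.det_fin_two] at hdet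
    simp [bloch_eq_fin_two, Complex.le_def] at h00 h11 hdet
    exact ⟨by linarith, by nlinarith⟩
  · rintro ⟨h₀, h⟩
    rw [Matrix.posSemidef_iff_dotProduct_mulVec]
    refine ⟨?_, fun x => ?_⟩
    · ext i j
      fin_cases i <;> fin_cases j <;> simp [bloch_eq_fin_two, Complex.ext_iff]
    · have := bloch_form_nonneg h₀ h (x 0).re (x 0).im (x 1).re (x 1).im
      simp [bloch_eq_fin_two, dotProduct, Matrix.mulVec, Fin.sum_univ_two, Complex.le_def]
      exact ⟨by linarith, by ring⟩

lemma Complex.I_pow_five : I ^ 5 = I := by rw [pow_succ, I_pow_four, one_mul]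

lemma inv_sqrt_two_sq : ((Real.sqrt 2 : ℂ))⁻¹ ^ 2 = 1 / 2 := by
  rw [inv_pow, ← Complex.ofReal_pow, Real.sq_sqrt zero_le_two]; norm_num

lemma Un_mul_bloch_mul_conjTranspose (m₀ m₁ m₂ m₃ : ℝ) :
    Un * bloch m₀ m₁ m₂ m₃ * Unᴴ = bloch m₀ m₂ m₁ (-m₃) := by
  ext i j
  fin_cases i <;> fin_cases j <;>
    simp [Un, bloch_eq_fin_two, pauli1, pauli2, Matrix.mul_apply, Fin.sum_univ_two,
      Complex.real_smul] <;>
    ring_nf <;> simp only [inv_sqrt_two_sq, I_sq, I_pow_three, I_pow_four, I_pow_five] <;> ring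

lemma Um_mul_bloch_mul_conjTranspose (m₀ m₁ m₂ m₃ : ℝ) :
    Um * bloch m₀ m₁ m₂ m₃ * Umᴴ = bloch m₀ (-m₂) (-m₁) (-m₃) := by
  ext i j
  fin_cases i <;> fin_cases j <;>
    simp [Um, bloch_eq_fin_two, pauli1, pauli2, Matrix.mul_apply, Fin.sum_univ_two,
      Complex.real_smul] <;>
    ring_nf <;> simp only [inv_sqrt_two_sq, I_sq, I_pow_three, I_pow_four, I_pow_five] <;> ring

lemma half_smul_one_add_smul_eq_bloch (s a b : ℝ) :
    ((1 : ℝ) / 2) • ((1 : Matrix (Fin 2) (Fin 2) ℂ) + s • (a • pauli1 + b • pauli2)) =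
      bloch (1 / 2) (s * a / 2) (s * b / 2) 0 := by
  rw [bloch]
  module

lemma sqrt_two_mul_abs_le_iff {a t : ℝ} (ht : 0 ≤ t) : √2 * |a| ≤ t ↔ 2 * a ^ 2 ≤ t ^ 2 := by
  rw [← sq_le_sq₀ (by positivity) ht, mul_pow, Real.sq_sqrt zero_le_two, sq_abs]

lemma abs_le_one_div_sqrt_two_iff {a : ℝ} : |a| ≤ 1 / √2 ↔ √2 * |a| ≤ 1 := by
  rw [le_div_iff₀ (by positivity), mul_comm]

lemma abs_add_add_abs_sub_le {α : Type*} [CommRing α] [LinearOrder α] [IsStrictOrderedRing α]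
    {a b m : α} (ha : |a| ≤ m) (hb : |b| ≤ m) : |a + b| + |a - b| ≤ 2 * m := by
  obtain ⟨ha₁, ha₂⟩ := abs_le.mp ha
  obtain ⟨hb₁, hb₂⟩ := abs_le.mp hb
  rcases abs_cases (a + b) with ⟨h, -⟩ | ⟨h, -⟩ <;>
    rcases abs_cases (a - b) with ⟨h', -⟩ | ⟨h', -⟩ <;> linarith

theorem abs_le_one_div_sqrt_two_of_add_eq_bloch {N P : Matrix (Fin 2) (Fin 2) ℂ} {c₁ c₂ : ℝ}
    (hN : N.PosSemidef) (hP : P.PosSemidef) (hNU : Un * N * Unᴴ = N) (hPU : Um * P * Umᴴ = P)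
    (hsum : N + P = bloch (1 / 2) (c₁ / 2) (c₂ / 2) 0) :
    |c₁| ≤ 1 / √2 ∧ |c₂| ≤ 1 / √2 := by
  obtain ⟨n₀, n₁, n₂, n₃, rfl⟩ := hN.isHermitian.exists_eq_bloch
  obtain ⟨p₀, p₁, p₂, p₃, rfl⟩ := hP.isHermitian.exists_eq_bloch
  rw [Un_mul_bloch_mul_conjTranspose, bloch_inj] at hNU
  rw [Um_mul_bloch_mul_conjTranspose, bloch_inj] at hPU
  rw [bloch_add, bloch_inj] at hsum
  rw [posSemidef_bloch_iff] at hN hP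
  obtain ⟨-, hn₂, -, -⟩ := hNU
  subst n₂
  obtain ⟨-, hp₂, -, -⟩ := hPU
  obtain ⟨h₀, h₁, h₂, -⟩ := hsum
  have hp₂' : p₂ ^ 2 = p₁ ^ 2 := by rw [← hp₂, neg_sq]
  have hn : √2 * |n₁| ≤ n₀ := (sqrt_two_mul_abs_le_iff hN.1).2 (by linarith [sq_nonneg n₃])
  have hp : √2 * |p₁| ≤ p₀ := (sqrt_two_mul_abs_le_iff hP.1).2 (by linarith [sq_nonneg p₃])
  have hs := Real.sqrt_nonneg 2
  rw [abs_le_one_div_sqrt_two_iff, abs_le_one_div_sqrt_two_iff,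
    show c₁ = 2 * (n₁ + p₁) by linarith, show c₂ = 2 * (n₁ - p₁) by linarith, abs_mul, abs_mul,
    abs_two]
  exact ⟨by linarith [mul_le_mul_of_nonneg_left (abs_add_le n₁ p₁) hs],
    by linarith [mul_le_mul_of_nonneg_left (abs_sub n₁ p₁) hs]⟩

@[simp] lemma sg_true : sg true = 1 := rfl

@[simp] lemma sg_false : sg false = -1 := rfl

lemma sg_not (b : Bool) : sg (!b) = -sg b := by cases b <;> simp

/-- Covariance and the two marginal conditions determine a bi-observable up to the single
correlation parameter `γ`. -/
noncomputable def covariantJoint (c₁ c₂ γ : ℝ) (x y : Bool) : Matrix (Fin 2) (Fin 2) ℂ :=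
  bloch ((1 + sg x * sg y * γ) / 4) ((sg x * c₁ + sg y * c₂) / 4) ((sg x * c₂ + sg y * c₁) / 4) 0

theorem covariantJoint_posSemidef {c₁ c₂ γ : ℝ} (h₁ : √2 * |c₁ + c₂| - 1 ≤ γ)
    (h₂ : γ ≤ 1 - √2 * |c₁ - c₂|) (x y : Bool) : (covariantJoint c₁ c₂ γ x y).PosSemidef := by
  have hp : 0 ≤ 1 + γ := by linarith [mul_nonneg (Real.sqrt_nonneg 2) (abs_nonneg (c₁ + c₂))]
  have hm : 0 ≤ 1 - γ := by linarith [mul_nonneg (Real.sqrt_nonneg 2) (abs_nonneg (c₁ - c₂))]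
  have hp' : 2 * (c₁ + c₂) ^ 2 ≤ (1 + γ) ^ 2 := (sqrt_two_mul_abs_le_iff hp).1 (by linarith)
  have hm' : 2 * (c₁ - c₂) ^ 2 ≤ (1 - γ) ^ 2 := (sqrt_two_mul_abs_le_iff hm).1 (by linarith)
  rw [covariantJoint, posSemidef_bloch_iff]
  refine ⟨?_, ?_⟩ <;> cases x <;> cases y <;> simp only [sg_true, sg_false] <;> nlinarith

section covariantJoint

variable (c₁ c₂ γ : ℝ)

theorem Un_mul_covariantJoint_mul_conjTranspose (x y : Bool) :
    Un * covariantJoint c₁ c₂ γ y x * Unᴴ = covariantJoint c₁ c₂ γ x y := by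
  rw [covariantJoint, Un_mul_bloch_mul_conjTranspose, covariantJoint, neg_zero, mul_comm (sg y),
    add_comm (sg y * c₁), add_comm (sg y * c₂)]

theorem Um_mul_covariantJoint_mul_conjTranspose (x y : Bool) :
    Um * covariantJoint c₁ c₂ γ (!y) (!x) * Umᴴ = covariantJoint c₁ c₂ γ x y := by
  rw [covariantJoint, Um_mul_bloch_mul_conjTranspose, covariantJoint, neg_zero, sg_not, sg_not]
  congr 1 <;> ring

theorem sum_covariantJoint_right (x : Bool) :
    ∑ y, covariantJoint c₁ c₂ γ x y =
      ((1 : ℝ) / 2) • ((1 : Matrix (Fin 2) (Fin 2) ℂ) + sg x • (c₁ • pauli1 + c₂ • pauli2)) := by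
  rw [Fintype.sum_bool, covariantJoint, covariantJoint, bloch_add,
    half_smul_one_add_smul_eq_bloch, sg_true, sg_false]
  congr 1 <;> ring

theorem sum_covariantJoint_left (y : Bool) :
    ∑ x, covariantJoint c₁ c₂ γ x y =
      ((1 : ℝ) / 2) • ((1 : Matrix (Fin 2) (Fin 2) ℂ) + sg y • (c₂ • pauli1 + c₁ • pauli2)) := by
  rw [Fintype.sum_bool, covariantJoint, covariantJoint, bloch_add,
    half_smul_one_add_smul_eq_bloch, sg_true, sg_false]
  congr 1 <;> ring

theorem sum_sum_covariantJoint : ∑ x, ∑ y, covariantJoint c₁ c₂ γ x y = 1 := by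
  rw [Fintype.sum_bool, sum_covariantJoint_right, sum_covariantJoint_right, sg_true, sg_false]
  module

end covariantJoint

theorem stmt14_general (c₁ c₂ : ℝ) :
    (∃ M : Bool → Bool → Matrix (Fin 2) (Fin 2) ℂ,
      (∀ b b', (M b b').PosSemidef) ∧ (∑ b : Bool, ∑ b' : Bool, M b b') = 1 ∧
      (∀ b b', Un * M b' b * Un.conjTranspose = M b b') ∧
      (∀ b b', Um * M (!b') (!b) * Um.conjTranspose = M b b') ∧
      (∀ b, ∑ b' : Bool, M b b' =
        ((1 : ℝ)/2) •
          ((1 : Matrix (Fin 2) (Fin 2) ℂ) + sg b • (c₁ • pauli1 + c₂ • pauli2))) ∧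
      (∀ b', ∑ b : Bool, M b b' =
        ((1 : ℝ)/2) •
          ((1 : Matrix (Fin 2) (Fin 2) ℂ) + sg b' • (c₂ • pauli1 + c₁ • pauli2)))) ↔
    (|c₁| ≤ 1 / Real.sqrt 2 ∧ |c₂| ≤ 1 / Real.sqrt 2) := by
  constructor
  · rintro ⟨M, hM, -, hUn, hUm, hA, -⟩
    have hsum := hA true
    rw [Fintype.sum_bool, half_smul_one_add_smul_eq_bloch] at hsum
    simp only [sg_true, one_mul] at hsum
    exact abs_le_one_div_sqrt_two_of_add_eq_bloch (hM true true) (hM true false) (hUn true true)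
      (hUm true false) hsum
  · rintro ⟨h₁, h₂⟩
    have hγ : √2 * |c₁ + c₂| - 1 ≤ 1 - √2 * |c₁ - c₂| := by
      have := mul_le_mul_of_nonneg_left (abs_add_add_abs_sub_le h₁ h₂) (Real.sqrt_nonneg 2)
      rw [show √2 * (2 * (1 / √2)) = 2 by field_simp] at this
      linarith
    exact ⟨covariantJoint c₁ c₂ (√2 * |c₁ + c₂| - 1), covariantJoint_posSemidef le_rfl hγ,
      sum_sum_covariantJoint .., Un_mul_covariantJoint_mul_conjTranspose c₁ c₂ _,
      Um_mul_covariantJoint_mul_conjTranspose c₁ c₂ _, sum_covariantJoint_right c₁ c₂ _,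
      sum_covariantJoint_left c₁ c₂ _⟩

/-- The noisy spin observables `A_c(x) = (1/2)[I + x(c₁σ₁+c₂σ₂)]` and
`B_c(y) = (1/2)[I + y(c₂σ₁+c₁σ₂)]` are the marginals of some (`D₂`-covariant)
bi-observable on `{−1,+1}²` if and only if `|c₁| ≤ 1/√2` and `|c₂| ≤ 1/√2`. -/
theorem stmt14 (c₁ c₂ : ℝ) (hc : c₁ ^ 2 + c₂ ^ 2 ≤ 1) :
    (∃ M : Bool → Bool → Matrix (Fin 2) (Fin 2) ℂ,
      (∀ b b', (M b b').PosSemidef) ∧ (∑ b : Bool, ∑ b' : Bool, M b b') = 1 ∧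
      (∀ b b', Un * M b' b * Un.conjTranspose = M b b') ∧
      (∀ b b', Um * M (!b') (!b) * Um.conjTranspose = M b b') ∧
      (∀ b, ∑ b' : Bool, M b b' =
        ((1 : ℝ)/2) •
          ((1 : Matrix (Fin 2) (Fin 2) ℂ) + sg b • (c₁ • pauli1 + c₂ • pauli2))) ∧
      (∀ b', ∑ b : Bool, M b b' =
        ((1 : ℝ)/2) •
          ((1 : Matrix (Fin 2) (Fin 2) ℂ) + sg b' • (c₂ • pauli1 + c₁ • pauli2)))) ↔
    (|c₁| ≤ 1 / Real.sqrt 2 ∧ |c₂| ≤ 1 / Real.sqrt 2) :=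
  stmt14_general c₁ c₂
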